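/- Let V be a real vector space of finite dimension 4 and let e₁, e₂, e₃ ∈ V be linearly independent. The linear map ⋀²V → ⋀³V × ⋀³V × ⋀³V defined by B ↦ (e₁∧B, e₂∧B, e₃∧B) is injective. (This is the pointwise statement that the boundary map W_{∂}^{(0,2)} is injective.) -/

import Mathlib

/-! If `v ∧ x = 0` and `d` is a linear functional, the antiderivation rule for the interior
product, `d ⌋ (v ∧ x) = d(v) x - v ∧ (d ⌋ x)`, gives `v ∧ (d ⌋ x) = d(v) x`. With functionals
`dᵢ` dual to independent vectors `e₀, …, e_{k-1}` that all annihilate `x`, this shows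
`x = e₀ ∧ (d₀ ⌋ x)` where the `(n-1)`-vector `d₀ ⌋ x` is annihilated by `e₁, …, e_{k-1}`.
Descending in degree, an `n`-vector annihilated by `k > n` independent vectors is zero, because
the contraction of a scalar vanishes. -/

open ExteriorAlgebra

variable {V : Type*} [AddCommGroup V] [Module ℝ V]

/-- The pointwise boundary map `W_{∂}^{(0,2)} : ⋀²V → ⋀³V × ⋀³V × ⋀³V`,
`B ↦ (e₁∧B, e₂∧B, e₃∧B)` (valued in the exterior algebra). -/
noncomputable def Wb02 (e₁ e₂ e₃ : V) :
    (⋀[ℝ]^2 V) →ₗ[ℝ]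
      ExteriorAlgebra ℝ V × ExteriorAlgebra ℝ V × ExteriorAlgebra ℝ V :=
  ((LinearMap.mulLeft ℝ (ι ℝ e₁)).comp (⋀[ℝ]^2 V).subtype).prod
    ((((LinearMap.mulLeft ℝ (ι ℝ e₂)).comp (⋀[ℝ]^2 V).subtype)).prod
      ((LinearMap.mulLeft ℝ (ι ℝ e₃)).comp (⋀[ℝ]^2 V).subtype))

namespace ExteriorAlgebra

open CliffordAlgebra

variable {R M : Type*} [CommRing R] [AddCommGroup M] [Module R M]

-- `ExteriorAlgebra R M` is `CliffordAlgebra (0 : QuadraticForm R M)`, whose interior product is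
-- `contractLeft`.
local infixl:70 " ⌋ " => contractLeft (Q := (0 : QuadraticForm R M))

theorem contractLeft_eq_zero_of_mem_exteriorPower_zero (d : Module.Dual R M)
    {x : ExteriorAlgebra R M} (hx : x ∈ ⋀[R]^0 M) : d ⌋ x = 0 := by
  rw [← ιMulti_span_fixedDegree] at hx
  induction hx using Submodule.span_induction with
  | mem _ h =>
    obtain ⟨v, rfl⟩ := h
    rw [ιMulti_zero_apply]
    exact contractLeft_one _ d
  | zero => exact map_zero _
  | add _ _ _ _ hx hy => rw [map_add, hx, hy, add_zero]
  | smul _ _ _ hx => rw [map_smul, hx, smul_zero]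

theorem ι_mul_mem_exteriorPower (m : M) {n : ℕ} {x : ExteriorAlgebra R M}
    (hx : x ∈ ⋀[R]^n M) : ι R m * x ∈ ⋀[R]^(n + 1) M := by
  rw [exteriorPower, pow_succ']
  exact Submodule.mul_mem_mul (LinearMap.mem_range_self _ m) hx

theorem contractLeft_ιMulti_mem_exteriorPower (d : Module.Dual R M) :
    ∀ {n : ℕ} (v : Fin (n + 1) → M), d ⌋ ιMulti R (n + 1) v ∈ ⋀[R]^n M
  | 0, v => by
    rw [ιMulti_succ_apply, contractLeft_ι_mul,
      contractLeft_eq_zero_of_mem_exteriorPower_zero d (ιMulti_range R 0 ⟨_, rfl⟩), mul_zero,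
      sub_zero]
    exact Submodule.smul_mem _ _ (ιMulti_range R 0 ⟨_, rfl⟩)
  | n + 1, v => by
    rw [ιMulti_succ_apply, contractLeft_ι_mul]
    exact sub_mem (Submodule.smul_mem _ _ (ιMulti_range R _ ⟨_, rfl⟩))
      (ι_mul_mem_exteriorPower _ (contractLeft_ιMulti_mem_exteriorPower d _))

theorem contractLeft_mem_exteriorPower (d : Module.Dual R M) {n : ℕ}
    {x : ExteriorAlgebra R M} (hx : x ∈ ⋀[R]^(n + 1) M) : d ⌋ x ∈ ⋀[R]^n M := by
  rw [← ιMulti_span_fixedDegree] at hx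
  refine (Submodule.span_le (p := (⋀[R]^n M).comap (contractLeft d))).2 ?_ hx
  rintro _ ⟨v, rfl⟩
  exact contractLeft_ιMulti_mem_exteriorPower d v

theorem ι_mul_contractLeft_of_ι_mul_eq_zero (d : Module.Dual R M) {v : M}
    {x : ExteriorAlgebra R M} (h : ι R v * x = 0) : ι R v * (d ⌋ x) = d v • x := by
  have key := contractLeft_ι_mul (Q := (0 : QuadraticForm R M)) d v x
  rw [h, map_zero, eq_comm, sub_eq_zero] at key
  exact key.symm

theorem eq_ι_mul_contractLeft_of_ι_mul_eq_zero {d : Module.Dual R M} {v : M}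
    (hv : d v = 1) {x : ExteriorAlgebra R M} (h : ι R v * x = 0) : x = ι R v * (d ⌋ x) := by
  rw [ι_mul_contractLeft_of_ι_mul_eq_zero _ h, hv, one_smul]

theorem eq_zero_of_forall_ι_mul_eq_zero {n k : ℕ} (hnk : n < k)
    (e : Fin k → M) (d : Fin k → Module.Dual R M) (hd : ∀ i j, d i (e j) = if i = j then 1 else 0)
    {x : ExteriorAlgebra R M} (hx : x ∈ ⋀[R]^n M) (h : ∀ i, ι R (e i) * x = 0) : x = 0 := by
  obtain ⟨k, rfl⟩ := Nat.exists_eq_add_one_of_ne_zero (Nat.ne_zero_of_lt hnk)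
  rw [eq_ι_mul_contractLeft_of_ι_mul_eq_zero (by rw [hd, if_pos rfl]) (h 0)]
  suffices d 0 ⌋ x = 0 by rw [this, mul_zero]
  cases n with
  | zero => exact contractLeft_eq_zero_of_mem_exteriorPower_zero _ hx
  | succ n =>
    refine eq_zero_of_forall_ι_mul_eq_zero (by omega) (e ∘ Fin.succ) (d ∘ Fin.succ)
      (fun i j => by simp [hd]) (contractLeft_mem_exteriorPower _ hx) fun i => ?_
    rw [Function.comp_apply, ι_mul_contractLeft_of_ι_mul_eq_zero _ (h i.succ), hd,
      if_neg (Fin.succ_ne_zero i).symm, zero_smul]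

end ExteriorAlgebra

theorem LinearIndependent.exists_biorthogonal_dual {K E ι : Type*} [Field K] [AddCommGroup E]
    [Module K E] [DecidableEq ι] {e : ι → E}
    (he : LinearIndependent K e) :
    ∃ d : ι → Module.Dual K E, ∀ i j, d i (e j) = if i = j then 1 else 0 := by
  choose d hd using fun i => LinearMap.exists_extend ((Module.Basis.span he).coord i)
  refine ⟨d, fun i j => ?_⟩
  have hdj := LinearMap.congr_fun (hd i) ⟨e j, Submodule.subset_span ⟨j, rfl⟩⟩
  rw [LinearMap.comp_apply, Submodule.subtype_apply] at hdj
  rw [hdj, ← Module.Basis.span_apply he j, Module.Basis.coord_apply, Module.Basis.repr_self,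
    Finsupp.single_apply]
  simp only [eq_comm]

theorem Wb02_injective_general (e₁ e₂ e₃ : V)
    (hind : LinearIndependent ℝ ![e₁, e₂, e₃]) :
    Function.Injective (Wb02 e₁ e₂ e₃) := by
  rw [← LinearMap.ker_eq_bot, LinearMap.ker_eq_bot']
  rintro ⟨B, hB⟩ hWB
  obtain ⟨d, hd⟩ := hind.exists_biorthogonal_dual
  refine Subtype.ext (eq_zero_of_forall_ι_mul_eq_zero (by norm_num : 2 < 3) _ d hd hB fun i => ?_)
  fin_cases i
  exacts [congrArg Prod.fst hWB, congrArg (Prod.fst ∘ Prod.snd) hWB,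
    congrArg (Prod.snd ∘ Prod.snd) hWB]

/-- For `V` 4-dimensional and `e₁, e₂, e₃` linearly independent, the map
`B ↦ (e₁∧B, e₂∧B, e₃∧B)` on `⋀²V` is injective. -/
theorem Wb02_injective [FiniteDimensional ℝ V]
    (hdim : Module.finrank ℝ V = 4) (e₁ e₂ e₃ : V)
    (hind : LinearIndependent ℝ ![e₁, e₂, e₃]) :
    Function.Injective (Wb02 e₁ e₂ e₃) :=
  Wb02_injective_general e₁ e₂ e₃ hind
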